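/- With the unicyclic setup and z_0 a leaf of highest level with level(z_0) = 1 whose unique neighbor is the cycle vertex v_1, write N(v_1) = {z_0, z_1, …, z_s} ∪ {v_2, v_m} where z_1,…,z_s are leaves. Then ν_3(G) = max{ν_3(G_{z_0,1}), 1 + ν_3(G_{z_0,2})} if s ≥ 1, and ν_3(G) = max{ν_3(G_{z_0,1}), 1 + ν_3(G_{z_0,3}), 1 + ν_3(G_{z_0,4})} if s = 0. -/

import Mathlib

noncomputable section

namespace PathIdeals

open MvPolynomial

variable {k : Type*} [Field k] {V : Type*} [Fintype V] [LinearOrder V]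

/-- Transport a graded piece along an equality of degrees. -/
def castLinear (k : Type*) [Field k] (N : ℕ → Type*) [∀ a, AddCommGroup (N a)]
    [∀ a, Module k (N a)] {a b : ℕ} (h : a = b) : N a →ₗ[k] N b := by
  subst h; exact LinearMap.id

/-- The Koszul-type differential computing `Tor^S(k, N)` for a graded module `N` over
`S = k[x_v : v ∈ V]` given by its graded pieces `N a` together with the multiplication maps
`x_v ⬝ : N a → N (a+1)`.  The map goes from homological degree `i`, internal degree `j`
(so coefficients in `N (j - i)`) to homological degree `i - 1`. -/
def koszulMap (k : Type*) [Field k] {V : Type*} [Fintype V] [LinearOrder V]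
    (N : ℕ → Type*) [∀ a, AddCommGroup (N a)] [∀ a, Module k (N a)]
    (mul : V → ∀ a : ℕ, N a →ₗ[k] N (a + 1)) (i j : ℕ) :
    ({s : Finset V // s.card = i} →₀ N (j - i)) →ₗ[k]
      ({s : Finset V // s.card = i - 1} →₀ N (j - (i - 1))) :=
  if h : 1 ≤ i ∧ i ≤ j then
    Finsupp.lsum k fun s : {s : Finset V // s.card = i} =>
      ∑ v ∈ s.1.attach,
        ((-1 : k) ^ (s.1.filter (fun w => w < v.1)).card) •
          ((Finsupp.lsingle
              (⟨s.1.erase v.1, by rw [Finset.card_erase_of_mem v.2, s.2]⟩ :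
                {s : Finset V // s.card = i - 1})).comp
            ((castLinear k N (by omega : (j - i) + 1 = j - (i - 1))).comp (mul v.1 (j - i))))
  else 0

/-- The `(i,j)`-th graded Betti number `β_{i,j} = dim_k Tor_i^S(k, N)_j` of the graded module
`N`, computed as the dimension of the homology of the Koszul complex tensored with `N`.
(For modules generated in non-negative degrees, such as ideals and their quotient rings,
the Betti numbers vanish when `j < i`.) -/
def bettiAux (k : Type*) [Field k] {V : Type*} [Fintype V] [LinearOrder V]
    (N : ℕ → Type*) [∀ a, AddCommGroup (N a)] [∀ a, Module k (N a)]
    (mul : V → ∀ a : ℕ, N a →ₗ[k] N (a + 1)) (i j : ℕ) : ℕ :=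
  if j < i then 0
  else
    Module.finrank k
      (↥(LinearMap.ker (koszulMap k N mul i j)) ⧸
        Submodule.comap (LinearMap.ker (koszulMap k N mul i j)).subtype
          (LinearMap.range (koszulMap k N mul (i + 1) j)))

/-- The degree-`a` graded piece of a homogeneous ideal `I ⊆ S`, as a `k`-subspace. -/
def idealPiece (k : Type*) [Field k] {V : Type*} (I : Ideal (MvPolynomial V k)) (a : ℕ) :
    Submodule k (MvPolynomial V k) :=
  Submodule.restrictScalars k I ⊓ homogeneousSubmodule V k a

/-- Multiplication by the variable `x_v` on graded pieces of an ideal. -/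
def idealMul {k : Type*} [Field k] {V : Type*} (I : Ideal (MvPolynomial V k)) (v : V) (a : ℕ) :
    ↥(idealPiece k I a) →ₗ[k] ↥(idealPiece k I (a + 1)) where
  toFun f := ⟨X v * f.1, by
    obtain ⟨h1, h2⟩ := Submodule.mem_inf.mp f.2
    refine Submodule.mem_inf.mpr ⟨I.mul_mem_left _ h1, ?_⟩
    rw [mem_homogeneousSubmodule] at h2 ⊢
    simpa [add_comm] using (isHomogeneous_X k v).mul h2⟩
  map_add' f g := by ext; simp [mul_add]
  map_smul' c f := by ext; simp [mul_smul_comm]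

/-- The `(i,j)`-th graded Betti number `β_{i,j}(I) = dim_k Tor_i^S(k, I)_j` of a homogeneous
ideal `I` of the polynomial ring `S = k[x_v : v ∈ V]`. -/
def gradedBetti (k : Type*) [Field k] {V : Type*} [Fintype V] [LinearOrder V]
    (I : Ideal (MvPolynomial V k)) (i j : ℕ) : ℕ :=
  bettiAux k (fun a => ↥(idealPiece k I a)) (idealMul I) i j

/-- The projective dimension `pd(I) = sup { i | β_{i,j}(I) ≠ 0 for some j }` of a homogeneous
ideal of the polynomial ring. -/
def pdIdeal (k : Type*) [Field k] {V : Type*} [Fintype V] [LinearOrder V]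
    (I : Ideal (MvPolynomial V k)) : ℕ :=
  sSup {i | ∃ j, gradedBetti k I i j ≠ 0}

/-- The Castelnuovo–Mumford regularity `reg(I) = sup { j - i | β_{i,j}(I) ≠ 0 }` of a
homogeneous ideal of the polynomial ring. -/
def regIdeal (k : Type*) [Field k] {V : Type*} [Fintype V] [LinearOrder V]
    (I : Ideal (MvPolynomial V k)) : ℕ :=
  sSup {r | ∃ i, gradedBetti k I i (i + r) ≠ 0}

/-- Multiplication by `x_v` on the (constant) ungraded module underlying an ideal. -/
def idealMulTotal {k : Type*} [Field k] {V : Type*} (I : Ideal (MvPolynomial V k)) (v : V)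
    (_ : ℕ) : ↥(Submodule.restrictScalars k I) →ₗ[k] ↥(Submodule.restrictScalars k I) where
  toFun f := ⟨X v * f.1, I.mul_mem_left _ f.2⟩
  map_add' f g := by ext; simp [mul_add]
  map_smul' c f := by ext; simp [mul_smul_comm]

/-- The `i`-th total Betti number `β_i(I) = dim_k Tor_i^S(k, I)` of a homogeneous ideal of
the polynomial ring, computed as the dimension of ungraded Koszul homology. -/
def totalBetti (k : Type*) [Field k] {V : Type*} [Fintype V] [LinearOrder V]
    (I : Ideal (MvPolynomial V k)) (i : ℕ) : ℕ :=
  bettiAux k (fun _ => ↥(Submodule.restrictScalars k I)) (idealMulTotal I) i (i + 1)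

/-- `P = I + J` is a Betti splitting if `β_i(P) = β_i(I) + β_i(J) + β_{i-1}(I ∩ J)`
for all `i ≥ 0` (where `β_{-1} = 0`). -/
def IsBettiSplitting (k : Type*) [Field k] {V : Type*} [Fintype V] [LinearOrder V]
    (P I J : Ideal (MvPolynomial V k)) : Prop :=
  P = I + J ∧ totalBetti k P 0 = totalBetti k I 0 + totalBetti k J 0 ∧
    ∀ i : ℕ, totalBetti k P (i + 1) =
      totalBetti k I (i + 1) + totalBetti k J (i + 1) + totalBetti k (I ⊓ J) i

/-- The subspace of the degree-`a` homogeneous component of `S` consisting of elements of a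
homogeneous ideal `I`. -/
def quotSub (k : Type*) [Field k] {V : Type*} (I : Ideal (MvPolynomial V k)) (a : ℕ) :
    Submodule k ↥(homogeneousSubmodule V k a) :=
  Submodule.comap (homogeneousSubmodule V k a).subtype (Submodule.restrictScalars k I)

/-- The degree-`a` graded piece of the quotient ring `S/I`. -/
def quotPiece (k : Type*) [Field k] {V : Type*} (I : Ideal (MvPolynomial V k)) (a : ℕ) :
    Type _ :=
  ↥(homogeneousSubmodule V k a) ⧸ quotSub k I a

instance (I : Ideal (MvPolynomial V k)) (a : ℕ) : AddCommGroup (quotPiece k I a) :=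
  inferInstanceAs (AddCommGroup (↥(homogeneousSubmodule V k a) ⧸ quotSub k I a))

instance (I : Ideal (MvPolynomial V k)) (a : ℕ) : Module k (quotPiece k I a) :=
  inferInstanceAs (Module k (↥(homogeneousSubmodule V k a) ⧸ quotSub k I a))

/-- Multiplication by `x_v` on the homogeneous components of `S`. -/
def homogMul (k : Type*) [Field k] {V : Type*} (v : V) (a : ℕ) :
    ↥(homogeneousSubmodule V k a) →ₗ[k] ↥(homogeneousSubmodule V k (a + 1)) where
  toFun f := ⟨X v * f.1, by
    have h2 := (mem_homogeneousSubmodule _ _).mp f.2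
    rw [mem_homogeneousSubmodule]
    simpa [add_comm] using (isHomogeneous_X k v).mul h2⟩
  map_add' f g := by ext; simp [mul_add]
  map_smul' c f := by ext; simp [mul_smul_comm]

/-- Multiplication by `x_v` on graded pieces of the quotient ring `S/I`. -/
def quotMul {k : Type*} [Field k] {V : Type*} (I : Ideal (MvPolynomial V k)) (v : V) (a : ℕ) :
    quotPiece k I a →ₗ[k] quotPiece k I (a + 1) :=
  Submodule.mapQ (quotSub k I a) (quotSub k I (a + 1)) (homogMul k v a)
    (fun _ hx => I.mul_mem_left _ hx)

/-- The Castelnuovo–Mumford regularity `reg(S/I) = sup { j - i | β_{i,j}(S/I) ≠ 0 }` of the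
quotient of the polynomial ring by a homogeneous ideal. -/
def regQuot (k : Type*) [Field k] {V : Type*} [Fintype V] [LinearOrder V]
    (I : Ideal (MvPolynomial V k)) : ℕ :=
  sSup {r | ∃ i, bettiAux k (quotPiece k I) (quotMul I) i (i + r) ≠ 0}

/-! ### Graphs, path ideals and path induced matching numbers -/

/-- `l` is (the vertex list of) a `t`-path of `G`: `t` distinct vertices with consecutive
vertices adjacent. -/
def IsPathList {V : Type*} (G : SimpleGraph V) (t : ℕ) (l : List V) : Prop :=
  l.length = t ∧ l.Nodup ∧ l.Chain' G.Adj

/-- The `t`-path ideal `I_t(G)` of the graph `G`, generated by the monomials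
`x_{u_1} ⋯ x_{u_t}` over all `t`-paths `u_1, …, u_t` of `G`. -/
def pathIdeal (k : Type*) [Field k] {V : Type*} (G : SimpleGraph V) (t : ℕ) :
    Ideal (MvPolynomial V k) :=
  Ideal.span {f | ∃ l : List V, IsPathList G t l ∧ f = (l.map X).prod}

/-- A family of `t`-paths indexed by `Fin n` is a `t`-path induced matching of `G` if the
paths are pairwise vertex-disjoint and the only edges of `G` between vertices of the paths
are the edges of the paths. -/
def IsPathInducedMatching {V : Type*} (G : SimpleGraph V) (t : ℕ) {n : ℕ}
    (P : Fin n → List V) : Prop :=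
  (∀ a, IsPathList G t (P a)) ∧
    (∀ a b, a ≠ b → ∀ x, x ∈ P a → x ∉ P b) ∧
    (∀ x y : V, (∃ a, x ∈ P a) → (∃ b, y ∈ P b) → G.Adj x y →
      ∃ a, [x, y] <:+: P a ∨ [y, x] <:+: P a)

/-- The `t`-path induced matching number `ν_t(G)`: the largest size of a `t`-path induced
matching of `G`. -/
def pathNu {V : Type*} (G : SimpleGraph V) (t : ℕ) : ℕ :=
  sSup {n | ∃ P : Fin n → List V, IsPathInducedMatching G t P}

/-- The induced subgraph of `G` on a set `A` of vertices, viewed as a graph on the same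
vertex set (all vertices outside `A` become isolated). -/
def inducedOn {V : Type*} (G : SimpleGraph V) (A : Set V) : SimpleGraph V where
  Adj x y := G.Adj x y ∧ x ∈ A ∧ y ∈ A
  symm := ⟨fun _ _ ⟨h, hx, hy⟩ => ⟨h.symm, hy, hx⟩⟩
  loopless := ⟨fun _ ⟨h, _, _⟩ => G.irrefl h⟩

/-- The set of neighbors of a set of vertices. -/
def nbhd {V : Type*} (G : SimpleGraph V) (A : Set V) : Set V :=
  {y | ∃ x ∈ A, G.Adj x y}

/-- The closed neighborhood `N[A] = A ∪ N(A)` of a set of vertices. -/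
def closedNbhd {V : Type*} (G : SimpleGraph V) (A : Set V) : Set V :=
  A ∪ nbhd G A

/-- A leaf of a graph is a vertex with a unique neighbor. -/
def IsLeaf {V : Type*} (G : SimpleGraph V) (x : V) : Prop :=
  ∃! y, G.Adj x y

/-- The level of a vertex `y`: its distance to the set of distinguished vertices
(the cycle vertices, resp. the root in the tree case). -/
def levelTo {V : Type*} (G : SimpleGraph V) {m : ℕ} (v : Fin m → V) (y : V) : ℕ :=
  sInf {d | ∃ i, G.dist (v i) y = d}

/-- `v` lists the vertices of a cycle of `G` (in cyclic order). -/
def IsCycleOn {V : Type*} (G : SimpleGraph V) {m : ℕ} [NeZero m] (v : Fin m → V) : Prop :=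
  Function.Injective v ∧ ∀ i : Fin m, G.Adj (v i) (v (i + 1))

/-- Every cycle of `G` has its vertices among `v 0, …, v (m-1)`; together with `IsCycleOn`
this says that the cycle on `v` is the unique cycle of `G`. -/
def UniqueCycle {V : Type*} (G : SimpleGraph V) {m : ℕ} (v : Fin m → V) : Prop :=
  ∀ (x : V) (c : G.Walk x x), c.IsCycle → ∀ y ∈ c.support, y ∈ Set.range v

/-- `G` has at most one cycle: either `G` is a tree (and `m = 1`, `v 0` being a chosen root),
or `G` has the unique cycle `v 0, …, v (m-1)` of length `m ≥ 3`. -/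
def AtMostOneCycle {V : Type*} (G : SimpleGraph V) {m : ℕ} [NeZero m] (v : Fin m → V) : Prop :=
  (m = 1 ∧ G.IsAcyclic) ∨ (3 ≤ m ∧ IsCycleOn G v ∧ UniqueCycle G v)

/-- The graph `Γ_G(C)`: the induced subgraph of `G` obtained by deleting the boundary
`∂(C) = N(C) \ C` of the cycle with vertex set `Cset`. -/
def Gamma {V : Type*} (G : SimpleGraph V) (Cset : Set V) : SimpleGraph V :=
  inducedOn G (nbhd G Cset \ Cset)ᶜ

/-- A graph (containing the cycle with vertex set `Cset`) is `3`-proximal if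
`ν_3(G) = ν_3(Γ_G(C))`. -/
def IsProximal3 {V : Type*} (G : SimpleGraph V) (Cset : Set V) : Prop :=
  pathNu G 3 = pathNu (Gamma G Cset) 3

/-!
In a `3`-path induced matching, a leaf `z` whose only neighbor is `u` can only occur as an end
of a path `z u w`, and all other paths avoid `N[{u, w}]`. Hence a maximum matching either misses
the leaves, or consists of `z u w` plus a matching of `G \ N[{u, w}]`. Conversely `z u w` is an
induced path with closed neighborhood `N[{u, w}]`, so it extends every matching of
`G \ N[{u, w}]`. When `u` carries a second leaf, taking `w` to be that leaf is optimal, as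
`N[{u, w}] ⊇ N[u]`; when `z` is the only leaf at the cycle vertex `u`, `w` is one of the two
cycle neighbors of `u`.
-/

section Neighborhoods

variable {V : Type*} {G : SimpleGraph V} {S : Set V} {u z : V}

lemma adj_iff_eq_of_neighborSet_eq (hz : G.neighborSet z = {u}) (w : V) :
    G.Adj z w ↔ w = u :=
  Set.ext_iff.1 hz w

lemma closedNbhd_mono {A B : Set V} (h : A ⊆ B) : closedNbhd G A ⊆ closedNbhd G B :=
  Set.union_subset_union h fun _ ⟨x, hx, hxy⟩ => ⟨x, h hx, hxy⟩

lemma closedNbhd_insert_of_neighborSet_eq (hz : G.neighborSet z = {u}) (hu : u ∈ S) :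
    closedNbhd G (insert z S) = closedNbhd G S := by
  have hadj := adj_iff_eq_of_neighborSet_eq hz
  ext x
  simp only [closedNbhd, nbhd, Set.mem_union, Set.mem_insert_iff, Set.mem_ofPred_eq,
    exists_eq_or_imp]
  constructor
  · rintro ((rfl | hx) | hx | hx)
    · exact Or.inr ⟨u, hu, ((hadj _).2 rfl).symm⟩
    · exact Or.inl hx
    · exact Or.inl ((hadj _).1 hx ▸ hu)
    · exact Or.inr hx
  · rintro (hx | hx)
    · exact Or.inl (Or.inr hx)
    · exact Or.inr (Or.inr hx)

end Neighborhoods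

section PathInducedMatching

variable {V : Type*} {G : SimpleGraph V} {A B S : Set V} {t n : ℕ} {P : Fin n → List V}

lemma isChain_inducedOn_iff {l : List V} (hl : 2 ≤ l.length) :
    l.IsChain (inducedOn G A).Adj ↔ l.IsChain G.Adj ∧ ∀ x ∈ l, x ∈ A := by
  induction l with
  | nil => simp at hl
  | cons a l ih =>
    rcases l with _ | ⟨b, _ | ⟨c, l⟩⟩
    · simp at hl
    · simp only [List.isChain_pair, List.mem_cons, List.not_mem_nil, inducedOn]
      aesop
    · rw [List.isChain_cons_cons, List.isChain_cons_cons (l := c :: l), ih (by simp)]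
      simp only [inducedOn, List.mem_cons]
      aesop

lemma isPathList_inducedOn_iff (ht : 2 ≤ t) {l : List V} :
    IsPathList (inducedOn G A) t l ↔ IsPathList G t l ∧ ∀ x ∈ l, x ∈ A := by
  constructor
  · rintro ⟨hlen, hnd, hch⟩
    have hch := (isChain_inducedOn_iff (hlen ▸ ht)).1 hch
    exact ⟨⟨hlen, hnd, hch.1⟩, hch.2⟩
  · rintro ⟨⟨hlen, hnd, hch⟩, hA⟩
    exact ⟨hlen, hnd, (isChain_inducedOn_iff (hlen ▸ ht)).2 ⟨hch, hA⟩⟩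

lemma isPathInducedMatching_inducedOn_iff (ht : 2 ≤ t) :
    IsPathInducedMatching (inducedOn G A) t P ↔
      IsPathInducedMatching G t P ∧ ∀ a, ∀ x ∈ P a, x ∈ A := by
  simp only [IsPathInducedMatching, isPathList_inducedOn_iff ht]
  constructor
  · rintro ⟨hpath, hdisj, hind⟩
    refine ⟨⟨fun a => (hpath a).1, hdisj, fun x y ⟨a, hx⟩ ⟨b, hy⟩ hxy => ?_⟩,
      fun a => (hpath a).2⟩
    exact hind x y ⟨a, hx⟩ ⟨b, hy⟩ ⟨hxy, (hpath a).2 x hx, (hpath b).2 y hy⟩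
  · rintro ⟨⟨hpath, hdisj, hind⟩, hA⟩
    exact ⟨fun a => ⟨hpath a, hA a⟩, hdisj, fun x y hx hy hxy => hind x y hx hy hxy.1⟩

lemma isPathInducedMatching_zero (P : Fin 0 → List V) : IsPathInducedMatching G t P :=
  ⟨finZeroElim, finZeroElim, fun _ _ ⟨a, _⟩ => a.elim0⟩

lemma IsPathInducedMatching.le_card [Finite V] (ht : 0 < t) (hP : IsPathInducedMatching G t P) :
    n ≤ Nat.card V := by
  have hne : ∀ a, P a ≠ [] := fun a h => by
    have := (hP.1 a).1
    simp [h] at this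
    omega
  have hinj : Function.Injective fun a => (P a).head (hne a) := fun a b hab => by
    by_contra hne'
    refine hP.2.1 a b hne' _ (List.head_mem (hne a)) ?_
    rw [show (P a).head (hne a) = (P b).head (hne b) from hab]
    exact List.head_mem _
  simpa using Nat.card_le_card_of_injective _ hinj

lemma nonempty_setOf_isPathInducedMatching :
    {n | ∃ P : Fin n → List V, IsPathInducedMatching G t P}.Nonempty :=
  ⟨0, finZeroElim, isPathInducedMatching_zero _⟩

lemma bddAbove_setOf_isPathInducedMatching [Finite V] (ht : 0 < t) :
    BddAbove {n | ∃ P : Fin n → List V, IsPathInducedMatching G t P} :=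
  ⟨Nat.card V, fun _ ⟨_, hP⟩ => hP.le_card ht⟩

lemma IsPathInducedMatching.le_pathNu [Finite V] (ht : 0 < t) (hP : IsPathInducedMatching G t P) :
    n ≤ pathNu G t :=
  le_csSup (bddAbove_setOf_isPathInducedMatching ht) ⟨P, hP⟩

lemma pathNu_le {M : ℕ} (h : ∀ n (P : Fin n → List V), IsPathInducedMatching G t P → n ≤ M) :
    pathNu G t ≤ M :=
  csSup_le nonempty_setOf_isPathInducedMatching fun n ⟨P, hP⟩ => h n P hP

lemma exists_isPathInducedMatching_pathNu [Finite V] (ht : 0 < t) :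
    ∃ P : Fin (pathNu G t) → List V, IsPathInducedMatching G t P :=
  Nat.sSup_mem nonempty_setOf_isPathInducedMatching
    (bddAbove_setOf_isPathInducedMatching ht)

lemma pathNu_inducedOn_le [Finite V] (ht : 2 ≤ t) : pathNu (inducedOn G A) t ≤ pathNu G t :=
  pathNu_le fun _ _ hP => ((isPathInducedMatching_inducedOn_iff ht).1 hP).1.le_pathNu (by omega)

lemma pathNu_inducedOn_mono [Finite V] (ht : 2 ≤ t) (hAB : A ⊆ B) :
    pathNu (inducedOn G A) t ≤ pathNu (inducedOn G B) t :=
  pathNu_le fun _ _ hP => by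
    obtain ⟨hP, hA⟩ := (isPathInducedMatching_inducedOn_iff ht).1 hP
    exact ((isPathInducedMatching_inducedOn_iff ht).2
      ⟨hP, fun a x hx => hAB (hA a x hx)⟩).le_pathNu (by omega)

lemma IsPathInducedMatching.comp_succAbove {P : Fin (n + 1) → List V}
    (hP : IsPathInducedMatching G t P) (a : Fin (n + 1)) :
    IsPathInducedMatching G t (P ∘ a.succAbove) := by
  refine ⟨fun b => hP.1 _, fun b c hbc => hP.2.1 _ _ (a.succAbove_right_injective.ne hbc),
    fun x y ⟨b, hx⟩ ⟨c, hy⟩ hxy => ?_⟩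
  obtain ⟨d, hd⟩ := hP.2.2 x y ⟨_, hx⟩ ⟨_, hy⟩ hxy
  have hda : d ≠ a := by
    rintro rfl
    exact hP.2.1 _ _ (Fin.succAbove_ne _ b) x hx
      (by rcases hd with hd | hd <;> exact hd.subset (by simp))
  obtain ⟨d, rfl⟩ := Fin.exists_succAbove_eq hda
  exact ⟨d, hd⟩

lemma IsPathInducedMatching.not_mem_closedNbhd {a b : Fin n} {x : V}
    (hP : IsPathInducedMatching G t P) (hba : b ≠ a) (hS : ∀ u ∈ S, u ∈ P a) (hx : x ∈ P b) :
    x ∉ closedNbhd G S := by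
  rintro (hxS | ⟨u, huS, hux⟩)
  · exact hP.2.1 a b hba.symm x (hS x hxS) hx
  · have hu := hS u huS
    obtain ⟨c, hc⟩ := hP.2.2 u x ⟨a, hu⟩ ⟨b, hx⟩ hux
    have huc : u ∈ P c ∧ x ∈ P c := by
      rcases hc with hc | hc <;> exact ⟨hc.subset (by simp), hc.subset (by simp)⟩
    obtain rfl | hca := eq_or_ne c a
    · exact hP.2.1 c b hba.symm x huc.2 hx
    · exact hP.2.1 c a hca u huc.1 hu

lemma IsPathInducedMatching.le_one_add_pathNu [Finite V] (ht : 2 ≤ t)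
    (hP : IsPathInducedMatching G t P) (a : Fin n) (hS : ∀ u ∈ S, u ∈ P a) :
    n ≤ 1 + pathNu (inducedOn G (closedNbhd G S)ᶜ) t := by
  obtain ⟨n, rfl⟩ : ∃ k, n = k + 1 := ⟨n - 1, by have := a.pos; omega⟩
  have hrest : IsPathInducedMatching (inducedOn G (closedNbhd G S)ᶜ) t (P ∘ a.succAbove) :=
    (isPathInducedMatching_inducedOn_iff ht).2 ⟨hP.comp_succAbove a,
      fun b _ hx => hP.not_mem_closedNbhd (a.succAbove_ne b) hS hx⟩
  have := hrest.le_pathNu (by omega)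
  omega

lemma IsPathInducedMatching.cons {Q : List V} (hQ : IsPathInducedMatching G t ![Q])
    (hP : IsPathInducedMatching G t P) (hPQ : ∀ a, ∀ x ∈ P a, x ∉ closedNbhd G {x | x ∈ Q}) :
    IsPathInducedMatching G t (Fin.cons Q P) := by
  have hQP : ∀ a, ∀ x ∈ Q, x ∉ P a := fun a x hxQ hxP => hPQ a x hxP (Or.inl hxQ)
  have hnadj : ∀ a, ∀ x ∈ Q, ∀ y ∈ P a, ¬G.Adj x y :=
    fun a x hxQ y hyP hxy => hPQ a y hyP (Or.inr ⟨x, hxQ, hxy⟩)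
  refine ⟨Fin.cases (hQ.1 0) hP.1, fun a b hab x hxa hxb => ?_, fun x y ⟨a, hx⟩ ⟨b, hy⟩ hxy => ?_⟩
  · cases a using Fin.cases <;> cases b using Fin.cases
    · exact hab rfl
    · exact hQP _ x hxa hxb
    · exact hQP _ x hxb hxa
    · exact hP.2.1 _ _ (fun h => hab (congrArg _ h)) x hxa hxb
  · cases a using Fin.cases <;> cases b using Fin.cases
    · obtain ⟨c, hc⟩ := hQ.2.2 x y ⟨0, hx⟩ ⟨0, hy⟩ hxy
      exact ⟨0, by simpa [Fin.fin_one_eq_zero c] using hc⟩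
    · exact (hnadj _ x hx y hy hxy).elim
    · exact (hnadj _ y hy x hx hxy.symm).elim
    · obtain ⟨c, hc⟩ := hP.2.2 x y ⟨_, hx⟩ ⟨_, hy⟩ hxy
      exact ⟨c.succ, by simpa using hc⟩

lemma one_add_pathNu_le [Finite V] (ht : 2 ≤ t) {Q : List V}
    (hQ : IsPathInducedMatching G t ![Q]) (hS : closedNbhd G {x | x ∈ Q} ⊆ closedNbhd G S) :
    1 + pathNu (inducedOn G (closedNbhd G S)ᶜ) t ≤ pathNu G t := by
  obtain ⟨P, hP⟩ :=
    exists_isPathInducedMatching_pathNu (G := inducedOn G (closedNbhd G S)ᶜ) (by omega : 0 < t)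
  obtain ⟨hP, hPS⟩ := (isPathInducedMatching_inducedOn_iff ht).1 hP
  have := (hQ.cons hP fun a x hx hxQ => hPS a x hx (hS hxQ)).le_pathNu (by omega)
  omega

end PathInducedMatching

section ThreePaths

variable {V : Type*} {G : SimpleGraph V} {Z : Set V} {n : ℕ} {P : Fin n → List V} {u z : V}

lemma isPathList_three_iff {l : List V} :
    IsPathList G 3 l ↔ ∃ a b c, l = [a, b, c] ∧ G.Adj a b ∧ G.Adj b c ∧ a ≠ c := by
  constructor
  · rintro ⟨hlen, hnd, hch⟩
    obtain ⟨a, b, c, rfl⟩ := List.length_eq_three.1 hlen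
    replace hch : [a, b, c].IsChain G.Adj := hch
    simp only [List.isChain_cons_cons, List.isChain_singleton, and_true] at hch
    exact ⟨a, b, c, rfl, hch.1, hch.2, by simp_all⟩
  · rintro ⟨a, b, c, rfl, hab, hbc, hac⟩
    exact ⟨rfl, by simp [hab.ne, hbc.ne, hac],
      List.isChain_cons_cons.2 ⟨hab, List.isChain_pair.2 hbc⟩⟩

lemma isPathInducedMatching_three_singleton {a b c : V} (hab : G.Adj a b) (hbc : G.Adj b c)
    (hac : ¬G.Adj a c) (hne : a ≠ c) : IsPathInducedMatching G 3 ![[a, b, c]] := by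
  refine ⟨fun _ => isPathList_three_iff.2 ⟨a, b, c, by simp, hab, hbc, hne⟩,
    fun i j hij => (hij (Subsingleton.elim i j)).elim, fun x y ⟨i, hx⟩ ⟨j, hy⟩ hxy => ⟨0, ?_⟩⟩
  simp only [Matrix.cons_val_fin_one, List.mem_cons, List.not_mem_nil, or_false] at hx hy ⊢
  rcases hx with rfl | rfl | rfl <;> rcases hy with rfl | rfl | rfl
  all_goals first
    | exact (G.irrefl hxy).elim
    | exact (hac hxy).elim
    | exact (hac hxy.symm).elim
    | exact Or.inl ⟨[], [_], rfl⟩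
    | exact Or.inr ⟨[], [_], rfl⟩
    | exact Or.inl ⟨[_], [], rfl⟩
    | exact Or.inr ⟨[_], [], rfl⟩

/-- A leaf `z` with neighbor `u` can only be an end of a `3`-path, whose middle is then `u`. -/
lemma IsPathInducedMatching.exists_adj_of_leaf_mem (hP : IsPathInducedMatching G 3 P)
    (hz : G.neighborSet z = {u}) {a : Fin n} (hza : z ∈ P a) :
    ∃ w, G.Adj u w ∧ w ≠ z ∧ u ∈ P a ∧ w ∈ P a := by
  obtain ⟨x, y, c, hPa, hxy, hyc, hxc⟩ := isPathList_three_iff.1 (hP.1 a)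
  have hadj := adj_iff_eq_of_neighborSet_eq hz
  rw [hPa] at hza ⊢
  simp only [List.mem_cons, List.not_mem_nil, or_false] at hza ⊢
  rcases hza with rfl | rfl | rfl
  · obtain rfl := (hadj _).1 hxy
    exact ⟨c, hyc, hxc.symm, by simp⟩
  · exact (hxc (((hadj _).1 hxy.symm).trans ((hadj _).1 hyc).symm)).elim
  · obtain rfl := (hadj _).1 hyc.symm
    exact ⟨x, hxy.symm, hxc, by simp⟩

lemma le_pathNu_or_le_one_add_pathNu_of_leaves [Finite V] (hZ : ∀ z ∈ Z, G.neighborSet z = {u})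
    (hP : IsPathInducedMatching G 3 P) :
    n ≤ pathNu (inducedOn G Zᶜ) 3 ∨ ∃ z ∈ Z, ∃ w, G.Adj u w ∧ w ≠ z ∧
      n ≤ 1 + pathNu (inducedOn G (closedNbhd G {u, w})ᶜ) 3 := by
  by_cases hmeet : ∃ a, ∃ z ∈ Z, z ∈ P a
  · obtain ⟨a, z, hzZ, hza⟩ := hmeet
    obtain ⟨w, huw, hwz, hua, hwa⟩ := hP.exists_adj_of_leaf_mem (hZ z hzZ) hza
    refine Or.inr ⟨z, hzZ, w, huw, hwz, hP.le_one_add_pathNu (by norm_num) a ?_⟩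
    rintro x (rfl | rfl) <;> assumption
  · simp only [not_exists, not_and] at hmeet
    exact Or.inl (((isPathInducedMatching_inducedOn_iff (by norm_num)).2
      ⟨hP, fun a x hx hxZ => hmeet a x hxZ hx⟩).le_pathNu (by norm_num))

end ThreePaths

section Leaves

variable {V : Type*} [Finite V] {G : SimpleGraph V} {Z : Set V} {u z : V}

theorem pathNu_three_eq_of_two_leaves (hZ : ∀ z ∈ Z, G.neighborSet z = {u}) {z₁ z₂ : V}
    (hz₁ : z₁ ∈ Z) (hz₂ : z₂ ∈ Z) (hne : z₁ ≠ z₂) :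
    pathNu G 3 = max (pathNu (inducedOn G Zᶜ) 3)
      (1 + pathNu (inducedOn G (closedNbhd G {u})ᶜ) 3) := by
  have hadj₁ := adj_iff_eq_of_neighborSet_eq (hZ z₁ hz₁)
  have hadj₂ := adj_iff_eq_of_neighborSet_eq (hZ z₂ hz₂)
  refine le_antisymm (pathNu_le fun n P hP => ?_) (max_le (pathNu_inducedOn_le (by norm_num)) ?_)
  · rcases le_pathNu_or_le_one_add_pathNu_of_leaves hZ hP with hn | ⟨_, _, w, -, -, hn⟩
    · exact le_max_of_le_left hn
    · exact le_max_of_le_right (hn.trans (Nat.add_le_add_left (pathNu_inducedOn_mono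
        (by norm_num) (Set.compl_subset_compl.2 (closedNbhd_mono (by simp)))) 1))
  · -- the path `z₁ u z₂` has the same closed neighborhood as `u`
    refine one_add_pathNu_le (by norm_num) (isPathInducedMatching_three_singleton ((hadj₁ u).2 rfl)
      ((hadj₂ u).2 rfl).symm (fun h => ((hadj₂ u).2 rfl).ne ((hadj₁ z₂).1 h)) hne) (le_of_eq ?_)
    rw [show {x | x ∈ [z₁, u, z₂]} = insert z₁ (insert z₂ {u}) by ext; simp; tauto,
      closedNbhd_insert_of_neighborSet_eq (hZ z₁ hz₁) (by simp),
      closedNbhd_insert_of_neighborSet_eq (hZ z₂ hz₂) (Set.mem_singleton u)]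

theorem pathNu_three_eq_of_leaf {p q : V} (hz : G.neighborSet z = {u})
    (hu : G.neighborSet u = {z, p, q}) (hp : p ≠ z) (hq : q ≠ z) :
    pathNu G 3 = max (max (pathNu (inducedOn G {z}ᶜ) 3)
        (1 + pathNu (inducedOn G (closedNbhd G {u, p})ᶜ) 3))
      (1 + pathNu (inducedOn G (closedNbhd G {u, q})ᶜ) 3) := by
  have hadj := adj_iff_eq_of_neighborSet_eq hz
  have hnbr (w : V) : G.Adj u w ↔ w = z ∨ w = p ∨ w = q := Set.ext_iff.1 hu w
  have hpath {w : V} (huw : G.Adj u w) (hwz : w ≠ z) :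
      1 + pathNu (inducedOn G (closedNbhd G {u, w})ᶜ) 3 ≤ pathNu G 3 := by
    refine one_add_pathNu_le (by norm_num) (isPathInducedMatching_three_singleton ((hadj u).2 rfl)
      huw (fun h => huw.ne ((hadj w).1 h).symm) hwz.symm) (le_of_eq ?_)
    rw [show {x | x ∈ [z, u, w]} = insert z {u, w} by ext; simp,
      closedNbhd_insert_of_neighborSet_eq hz (by simp)]
  refine le_antisymm (pathNu_le fun n P hP => ?_) (max_le (max_le
    (pathNu_inducedOn_le (by norm_num)) (hpath ((hnbr p).2 (by simp)) hp))
    (hpath ((hnbr q).2 (by simp)) hq))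
  rcases le_pathNu_or_le_one_add_pathNu_of_leaves (Z := {z}) (by simpa using hz) hP with
    hn | ⟨_, rfl, w, huw, hwz, hn⟩
  · exact le_max_of_le_left (le_max_of_le_left hn)
  · rcases (hnbr w).1 huw with rfl | rfl | rfl
    · exact (hwz rfl).elim
    · exact le_max_of_le_left (le_max_of_le_right hn)
    · exact le_max_of_le_right hn

end Leaves

/-- Each cycle vertex `v i` has the two distinct neighbors `v (i + 1)` and `v (i - 1)`. -/
lemma IsCycleOn.apply_ne_of_neighborSet_eq {V : Type*} {G : SimpleGraph V} {m : ℕ} [NeZero m]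
    {v : Fin m → V} (hcyc : IsCycleOn G v) (hm : 3 ≤ m) {x y : V}
    (hx : G.neighborSet x = {y}) (i : Fin m) : v i ≠ x := by
  rintro rfl
  have hadj := adj_iff_eq_of_neighborSet_eq hx
  have hsucc : v (i + 1) = y := (hadj _).1 (hcyc.2 i)
  have hpred : v (i - 1) = y := (hadj _).1 (by simpa using (hcyc.2 (i - 1)).symm)
  have htwo : (1 + 1 : Fin m) = 0 := by
    have := congrArg (· + 1) (hcyc.1 (hsucc.trans hpred.symm))
    simpa [add_assoc] using this
  rw [Fin.ext_iff, Fin.val_add, Fin.val_one', Fin.val_zero, Nat.mod_eq_of_lt (by omega : 1 < m),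
    Nat.mod_eq_of_lt (by omega : 2 < m)] at htwo
  omega

theorem pathNu_three_recursion_level_one_general
    {V : Type*} [Fintype V]
    (G : SimpleGraph V)
    (m : ℕ) [NeZero m] (hm : 3 ≤ m) (v : Fin m → V)
    (hcyc : IsCycleOn G v)
    (s : ℕ) (z : Fin (s + 1) → V) (hz : Function.Injective z)
    (hzy : ∀ a, G.neighborSet (z a) = {v 0})
    (hnv : G.neighborSet (v 0) = Set.range z ∪ {v 1, v (-1)}) :
    (1 ≤ s →
      pathNu G 3 = max (pathNu (inducedOn G (Set.range z)ᶜ) 3)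
        (1 + pathNu (inducedOn G (closedNbhd G {v 0})ᶜ) 3)) ∧
    (s = 0 →
      pathNu G 3 = max (max (pathNu (inducedOn G (Set.range z)ᶜ) 3)
          (1 + pathNu (inducedOn G (closedNbhd G ({v 0, v 1} : Set V))ᶜ) 3))
        (1 + pathNu (inducedOn G (closedNbhd G ({v 0, v (-1)} : Set V))ᶜ) 3)) := by
  refine ⟨fun hs => ?_, fun hs => ?_⟩
  · refine pathNu_three_eq_of_two_leaves (by rintro _ ⟨a, rfl⟩; exact hzy a)
      (Set.mem_range_self 0) (Set.mem_range_self ⟨1, by omega⟩) (hz.ne ?_)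
    simp [Fin.ext_iff]
  · subst hs
    have hrange : Set.range z = {z 0} := @Set.range_unique _ _ z (inferInstanceAs (Unique (Fin 1)))
    rw [hrange, Set.singleton_union] at hnv
    rw [hrange]
    exact pathNu_three_eq_of_leaf (hzy 0) hnv (hcyc.apply_ne_of_neighborSet_eq hm (hzy 0) 1)
      (hcyc.apply_ne_of_neighborSet_eq hm (hzy 0) (-1))

/-- **Lemma (recursion for `ν_3`, leaf of level `1`).**
With the unicyclic setup and `z_0` a leaf of highest level with `level(z_0) = 1` whose
unique neighbor is the cycle vertex `v_1`, write `N(v_1) = {z_0, z_1, …, z_s} ∪ {v_2, v_m}`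
where `z_1, …, z_s` are leaves.  Then
`ν_3(G) = max(ν_3(G_{z_0,1}), 1 + ν_3(G_{z_0,2}))` if `s ≥ 1`, and
`ν_3(G) = max(ν_3(G_{z_0,1}), 1 + ν_3(G_{z_0,3}), 1 + ν_3(G_{z_0,4}))` if `s = 0`. -/
theorem pathNu_three_recursion_level_one
    {V : Type*} [Fintype V] [LinearOrder V]
    (G : SimpleGraph V) (hconn : G.Connected)
    (m : ℕ) [NeZero m] (hm : 3 ≤ m) (v : Fin m → V)
    (hcyc : IsCycleOn G v) (huniq : UniqueCycle G v)
    (s : ℕ) (z : Fin (s + 1) → V) (hz : Function.Injective z)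
    (hzy : ∀ a, G.neighborSet (z a) = {v 0})
    (hnv : G.neighborSet (v 0) = Set.range z ∪ {v 1, v (-1)})
    (hlevel : levelTo G v (z 0) = 1)
    (hhigh : ∀ w, IsLeaf G w → levelTo G v w ≤ levelTo G v (z 0)) :
    (1 ≤ s →
      pathNu G 3 = max (pathNu (inducedOn G (Set.range z)ᶜ) 3)
        (1 + pathNu (inducedOn G (closedNbhd G {v 0})ᶜ) 3)) ∧
    (s = 0 →
      pathNu G 3 = max (max (pathNu (inducedOn G (Set.range z)ᶜ) 3)
          (1 + pathNu (inducedOn G (closedNbhd G ({v 0, v 1} : Set V))ᶜ) 3))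
        (1 + pathNu (inducedOn G (closedNbhd G ({v 0, v (-1)} : Set V))ᶜ) 3)) :=
  pathNu_three_recursion_level_one_general G m hm v hcyc s z hz hzy hnv

end PathIdeals
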